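/- For the two-query instance with ads A=(p=1,b=2,z₁), B=(p=0,b=2,z₂) on query q₁ and C=(p=1,b=2,z₂), D=(p=0,b=1,z₁) on query q₂ (queries equally likely), under mechanism ONE: any efficiency-maximizing prediction map f must satisfy f(z₁) > f(z₂) > f(z₁)/2, and any such f deterministically shows A and C, giving observed CTR 1 for both buckets; since f(z₂) < f(z₁) ≤ 1 forces f(z₂) < 1, no efficiency-maximizing map is self-calibrated. -/

import Mathlib

open Classical

/- Mechanism ONE.  Two equally likely queries and two buckets z₁, z₂.
q₁ : A = (p=1, b=2, z₁), B = (p=0, b=2, z₂);  q₂ : C = (p=1, b=2, z₂), D = (p=0, b=1, z₁).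
A prediction map is a pair (f1, f2) = (f(z₁), f(z₂)).  On each query the ad with the
larger score b·f(z) shows (ties broken uniformly at random); showing ad (p,b) yields
expected value p·b. -/

/-- expected value per query of the map (f1, f2) -/
noncomputable def EV6 (f1 f2 : ℝ) : ℝ :=
  (1/2) * (if 2*f1 > 2*f2 then 2 else if 2*f2 > 2*f1 then 0 else 1)   -- q₁: A vs B
  + (1/2) * (if 2*f2 > f1 then 2 else if f1 > 2*f2 then 0 else 1)     -- q₂: C vs D

/-- show probability of ad A (given its query) -/
noncomputable def wA (f1 f2 : ℝ) : ℝ := if 2*f1 > 2*f2 then 1 else if 2*f2 > 2*f1 then 0 else 1/2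
/-- show probability of ad B -/
noncomputable def wB (f1 f2 : ℝ) : ℝ := if 2*f2 > 2*f1 then 1 else if 2*f1 > 2*f2 then 0 else 1/2
/-- show probability of ad C -/
noncomputable def wC (f1 f2 : ℝ) : ℝ := if 2*f2 > f1 then 1 else if f1 > 2*f2 then 0 else 1/2
/-- show probability of ad D -/
noncomputable def wD (f1 f2 : ℝ) : ℝ := if f1 > 2*f2 then 1 else if 2*f2 > f1 then 0 else 1/2

/-- observed CTR of bucket z₁ (ads A with p=1 and D with p=0) -/
noncomputable def obsZ1 (f1 f2 : ℝ) : ℝ :=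
  (wA f1 f2 * 1 + wD f1 f2 * 0) / (wA f1 f2 + wD f1 f2)

/-- observed CTR of bucket z₂ (ads B with p=0 and C with p=1) -/
noncomputable def obsZ2 (f1 f2 : ℝ) : ℝ :=
  (wB f1 f2 * 0 + wC f1 f2 * 1) / (wB f1 f2 + wC f1 f2)

/-! On each query the expected value of mechanism ONE is at most 2 (the bid of its only `p = 1`
ad), attained exactly when that ad wins outright. Hence an efficiency-maximizing map is precisely
one with `f₂ < f₁ < 2 f₂` (such maps exist, e.g. `(1, 3/4)`), so it always shows A and C. Both
buckets then only show ads with `p = 1` and observe CTR 1, while `f₂ < f₁ ≤ 1`. -/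

lemma auction_value_le_two (a b : ℝ) :
    (if a > b then (2 : ℝ) else if b > a then 0 else 1) ≤ 2 := by
  split_ifs <;> norm_num

lemma two_le_auction_value_iff (a b : ℝ) :
    2 ≤ (if a > b then (2 : ℝ) else if b > a then 0 else 1) ↔ b < a := by
  split_ifs with hab <;> simp only [hab, le_refl] <;> norm_num

lemma two_le_EV6_iff {f1 f2 : ℝ} : 2 ≤ EV6 f1 f2 ↔ f2 < f1 ∧ f1 < 2 * f2 := by
  have hq₁ := auction_value_le_two (2 * f1) (2 * f2)
  have hq₂ := auction_value_le_two (2 * f2) f1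
  rw [← two_le_auction_value_iff (2 * f2) f1, ← mul_lt_mul_iff_of_pos_left two_pos,
    ← two_le_auction_value_iff (2 * f1) (2 * f2), EV6]
  constructor
  · intro h
    constructor <;> linarith
  · rintro ⟨h₁, h₂⟩
    linarith

lemma wA_eq_one {f1 f2 : ℝ} (h : f2 < f1) : wA f1 f2 = 1 := by
  simp [wA, h]

lemma wB_eq_zero {f1 f2 : ℝ} (h : f2 < f1) : wB f1 f2 = 0 := by
  simp [wB, h, h.le]

lemma wC_eq_one {f1 f2 : ℝ} (h : f1 < 2 * f2) : wC f1 f2 = 1 := by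
  simp [wC, h]

lemma wD_eq_zero {f1 f2 : ℝ} (h : f1 < 2 * f2) : wD f1 f2 = 0 := by
  simp [wD, h, h.le]

/-- Any efficiency-maximizing prediction map `(f1,f2)` (with values in `[0,1]`) must
satisfy `f1 > f2 > f1/2`; such a map deterministically shows A and C, so the observed
CTR is 1 in both buckets; and since `f2 < f1 ≤ 1` forces `f2 < 1`, the observed CTR of
bucket z₂ differs from `f2`: no efficiency-maximizing map is self-calibrated. -/
theorem no_efficiency_maximizing_map_is_calibrated :
    ∀ f1 f2 : ℝ, 0 ≤ f1 → f1 ≤ 1 → 0 ≤ f2 → f2 ≤ 1 →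
      (∀ g1 g2 : ℝ, 0 ≤ g1 → g1 ≤ 1 → 0 ≤ g2 → g2 ≤ 1 → EV6 g1 g2 ≤ EV6 f1 f2) →
      (f1 > f2 ∧ f2 > f1 / 2) ∧
      (wA f1 f2 = 1 ∧ wC f1 f2 = 1 ∧ wB f1 f2 = 0 ∧ wD f1 f2 = 0) ∧
      (obsZ1 f1 f2 = 1 ∧ obsZ2 f1 f2 = 1) ∧
      f2 < 1 ∧ obsZ2 f1 f2 ≠ f2 := by
  intro f1 f2 _ hf1 _ _ hmax
  have hwitness : 2 ≤ EV6 1 (3 / 4) := two_le_EV6_iff.mpr (by norm_num)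
  obtain ⟨h₁, h₂⟩ : f2 < f1 ∧ f1 < 2 * f2 :=
    two_le_EV6_iff.mp <|
      hwitness.trans (hmax 1 (3 / 4) (by norm_num) le_rfl (by norm_num) (by norm_num))
  have hobs₁ : obsZ1 f1 f2 = 1 := by simp [obsZ1, wA_eq_one h₁, wD_eq_zero h₂]
  have hobs₂ : obsZ2 f1 f2 = 1 := by simp [obsZ2, wB_eq_zero h₁, wC_eq_one h₂]
  have hf2 : f2 < 1 := h₁.trans_le hf1
  exact ⟨⟨h₁, by linarith⟩, ⟨wA_eq_one h₁, wC_eq_one h₂, wB_eq_zero h₁, wD_eq_zero h₂⟩,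
    ⟨hobs₁, hobs₂⟩, hf2, hobs₂ ▸ hf2.ne'⟩
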